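/- There is no field L with ℚ(i) ⊆ L ⊆ ℂ such that L/ℚ is a Galois extension with Galois group cyclic of order 4. -/
import Mathlib


open IntermediateField in
/-- There is no field `L` with `ℚ(i) ⊆ L ⊆ ℂ` such that `L/ℚ` is a Galois
extension with cyclic Galois group of order 4. -/
theorem stmt_5 :
    ¬ ∃ L : IntermediateField ℚ ℂ, ℚ⟮Complex.I⟯ ≤ L ∧ IsGalois ℚ L ∧
      IsCyclic (L ≃ₐ[ℚ] L) ∧ Nat.card (L ≃ₐ[ℚ] L) = 4 := by
  rintro ⟨L, hle, hgal, hcyc, hcard⟩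
  have hi : Complex.I ∈ L := hle (IntermediateField.mem_adjoin_simple_self ℚ Complex.I)
  haveI := hgal
  haveI : Finite (L ≃ₐ[ℚ] L) := Nat.finite_of_card_ne_zero (by omega)
  haveI : Fintype (L ≃ₐ[ℚ] L) := Fintype.ofFinite _
  -- complex conjugation restricted to L
  let c : L ≃ₐ[ℚ] L := AlgEquiv.restrictNormal (Complex.conjAe.restrictScalars ℚ) L
  have key : ∀ x : L, ((c x : ℂ)) = starRingEnd ℂ (x : ℂ) := fun x =>
    AlgEquiv.restrictNormal_commutes (Complex.conjAe.restrictScalars ℚ) L x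
  -- c has square 1
  have hc2 : c * c = 1 := by
    ext x
    have : ((c (c x) : ℂ)) = (x : ℂ) := by
      rw [key, key, Complex.conj_conj]
    exact_mod_cast this
  -- c is a square of some τ
  obtain ⟨g, hg⟩ := hcyc.exists_generator
  have horder : orderOf g = 4 := by
    rw [orderOf_eq_card_of_forall_mem_zpowers hg]
    exact hcard
  obtain ⟨k, hk⟩ := hg c
  have hk' : g ^ k = c := hk
  have h2k : ((4 : ℕ) : ℤ) ∣ 2 * k := by
    rw [← horder, orderOf_dvd_iff_zpow_eq_one]
    rw [two_mul, zpow_add, hk']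
    exact hc2
  obtain ⟨m, hm⟩ : ∃ m : ℤ, k = 2 * m := ⟨k / 2, by omega⟩
  set τ : L ≃ₐ[ℚ] L := g ^ m with hτ
  have hcτ : c = τ * τ := by
    rw [hτ, ← zpow_add, ← hk', hm]; ring_nf
  -- τ sends I to ± I
  set iL : L := ⟨Complex.I, hi⟩ with hiL
  have hsq : iL * iL = -1 := by
    apply Subtype.ext
    push_cast
    simp [hiL, Complex.I_mul_I]
  have hτsq : (τ iL) * (τ iL) = -1 := by rw [← map_mul, hsq, map_neg, map_one]
  have hττ : τ (τ iL) = iL := by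
    have : (τ iL - iL) * (τ iL + iL) = 0 := by linear_combination hτsq - hsq
    rcases mul_eq_zero.1 this with h | h
    · have h' : τ iL = iL := by linear_combination h
      rw [h', h']
    · have h' : τ iL = -iL := by linear_combination h
      rw [h', map_neg, h', neg_neg]
  -- contradiction
  have : c iL = iL := by rw [hcτ]; exact hττ
  have hcoe : ((c iL : ℂ)) = Complex.I := by rw [this]
  rw [key, hiL] at hcoe
  simp only [Complex.conj_I] at hcoe
  exact Complex.I_ne_zero (by linear_combination (-1/2 : ℂ) * hcoe)
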